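/- Define h : {(x,y) : 0 ≤ x ≤ y ≤ 1} → ℝ by h(x,y) = (1/2)·max(x+y−2/3, 0) + (2/3)·max(1−x−y, 0) + x + (2/3)·y. Then for all 0 ≤ θ₁ ≤ θ₂ ≤ θ₃ ≤ 1, writing s = max(θ₁+θ₂+θ₃, 1), we have 2s ≤ h(θ₁,θ₂) + h(θ₁,θ₃) + h(θ₂,θ₃) ≤ (7/3)·s. -/

import Mathlib

noncomputable def hB (x y : ℝ) : ℝ :=
  1 / 2 * max (x + y - 2 / 3) 0 + 2 / 3 * max (1 - x - y) 0 + x + 2 / 3 * y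

/-!
`hB x y = g (x + y) + x + 2/3 y`, where `g` is convex and piecewise linear with pieces
`2/3 (1 - u)`, `1/3 - u/6`, `1/2 (u - 2/3)` on `u ≤ 2/3`, `2/3 ≤ u ≤ 1`, `1 ≤ u`.
Since `2 max(s, 1)` is the larger of `2s` and `2`, the lower bound only needs `hB` to dominate
each of its pieces, and it becomes a linear inequality. The upper bound
is checked piece by piece: once the interval of each pairwise sum is fixed, all terms are linear.
-/

lemma le_hB (x y : ℝ) :
    2 / 3 * (1 - (x + y)) + x + 2 / 3 * y ≤ hB x y ∧
    1 / 3 - (x + y) / 6 + x + 2 / 3 * y ≤ hB x y ∧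
    1 / 2 * (x + y - 2 / 3) + x + 2 / 3 * y ≤ hB x y := by
  have h₁ := le_max_left (x + y - 2 / 3) 0
  have h₂ := le_max_right (x + y - 2 / 3) 0
  have h₃ := le_max_left (1 - x - y) 0
  have h₄ := le_max_right (1 - x - y) 0
  refine ⟨?_, ?_, ?_⟩ <;> unfold hB <;> linarith

lemma hB_cases (x y : ℝ) :
    (x + y ≤ 2 / 3 ∧ hB x y = 2 / 3 * (1 - (x + y)) + x + 2 / 3 * y) ∨
    (2 / 3 ≤ x + y ∧ x + y ≤ 1 ∧ hB x y = 1 / 3 - (x + y) / 6 + x + 2 / 3 * y) ∨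
    (1 ≤ x + y ∧ hB x y = 1 / 2 * (x + y - 2 / 3) + x + 2 / 3 * y) := by
  unfold hB
  rcases le_total (x + y) (2 / 3) with h | h
  · left
    exact ⟨h, by rw [max_eq_right (by linarith), max_eq_left (by linarith)]; ring⟩
  rcases le_total (x + y) 1 with h' | h'
  · right; left
    exact ⟨h, h', by rw [max_eq_left (by linarith), max_eq_left (by linarith)]; ring⟩
  · right; right
    exact ⟨h', by rw [max_eq_left (by linarith), max_eq_right (by linarith)]; ring⟩

lemma two_mul_max_le_sum_hB {θ₁ θ₂ θ₃ : ℝ} (h₀ : 0 ≤ θ₁) (h₁₂ : θ₁ ≤ θ₂) :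
    2 * max (θ₁ + θ₂ + θ₃) 1 ≤ hB θ₁ θ₂ + hB θ₁ θ₃ + hB θ₂ θ₃ := by
  obtain ⟨a₁, a₂, a₃⟩ := le_hB θ₁ θ₂
  obtain ⟨b₁, b₂, b₃⟩ := le_hB θ₁ θ₃
  obtain ⟨c₁, c₂, c₃⟩ := le_hB θ₂ θ₃
  rw [mul_max_of_nonneg _ _ zero_le_two]
  exact max_le (by linarith) (by linarith)

lemma sum_hB_le_seven_thirds_mul_max {θ₁ θ₂ θ₃ : ℝ} (h₀ : 0 ≤ θ₁) (h₁₂ : θ₁ ≤ θ₂)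
    (h₂₃ : θ₂ ≤ θ₃) (h₃ : θ₃ ≤ 1) :
    hB θ₁ θ₂ + hB θ₁ θ₃ + hB θ₂ θ₃ ≤ 7 / 3 * max (θ₁ + θ₂ + θ₃) 1 := by
  rw [mul_max_of_nonneg _ _ (by norm_num : (0 : ℝ) ≤ 7 / 3)]
  rcases hB_cases θ₁ θ₂ with ⟨_, ha⟩ | ⟨_, _, ha⟩ | ⟨_, ha⟩ <;>
  rcases hB_cases θ₁ θ₃ with ⟨_, hb⟩ | ⟨_, _, hb⟩ | ⟨_, hb⟩ <;>
  rcases hB_cases θ₂ θ₃ with ⟨_, hc⟩ | ⟨_, _, hc⟩ | ⟨_, hc⟩ <;>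
  rw [ha, hb, hc] <;>
  rcases le_total (θ₁ + θ₂ + θ₃) 1 with hs | hs <;>
  first
  | exact le_max_of_le_right (by linarith)
  | exact le_max_of_le_left (by linarith)

theorem stmt_7 : ∀ θ₁ θ₂ θ₃ : ℝ, 0 ≤ θ₁ → θ₁ ≤ θ₂ → θ₂ ≤ θ₃ → θ₃ ≤ 1 →
    2 * max (θ₁ + θ₂ + θ₃) 1 ≤ hB θ₁ θ₂ + hB θ₁ θ₃ + hB θ₂ θ₃ ∧
    hB θ₁ θ₂ + hB θ₁ θ₃ + hB θ₂ θ₃ ≤ 7 / 3 * max (θ₁ + θ₂ + θ₃) 1 :=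
  fun _ _ _ h₀ h₁₂ h₂₃ h₃ =>
    ⟨two_mul_max_le_sum_hB h₀ h₁₂, sum_hB_le_seven_thirds_mul_max h₀ h₁₂ h₂₃ h₃⟩
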